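/- Let A ∈ ℝ^{n×n}, 1 ≤ α < 2, θ = π − απ/2. If there exists a symmetric positive definite X ∈ ℝ^{n×n} such that the block matrix [[(AᵀX + XA)sinθ, (XA − AᵀX)cosθ],[(AᵀX − XA)cosθ, (AᵀX + XA)sinθ]] is negative definite, then every eigenvalue λ of A satisfies |arg(λ)| > απ/2. -/

import Mathlib

/-!
If `A v = λ v` with `v = x + i y` and `λ = p + i q`, then `A x = p x - q y` and `A y = q x + p y`.
On the real vector `(x, y)` the quadratic form of the block matrix `M` then equals
`2 (p sin θ + q cos θ) (xᵀ X x + yᵀ X y)`, so `M < 0` and `X > 0` force `p sin θ + q cos θ < 0`.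
The conjugate eigenpair gives the same with `-q`, hence `p sin θ + |q| cos θ < 0`, i.e.
`|λ| sin (θ + |arg λ|) < 0`. As `θ ≥ 0` and `|arg λ| ≤ π`, this forces `θ + |arg λ| > π`.
-/

open Matrix

namespace Matrix

variable {ι : Type*} [Fintype ι]

def sectorLMI {R : Type*} [CommRing R] (s c : R) (A X : Matrix ι ι R) : Matrix (ι ⊕ ι) (ι ⊕ ι) R :=
  fromBlocks (s • (Aᵀ * X + X * A)) (c • (X * A - Aᵀ * X))
    (c • (Aᵀ * X - X * A)) (s • (Aᵀ * X + X * A))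

theorem sumElim_dotProduct_sectorLMI_mulVec_sumElim {R : Type*} [CommRing R]
    {A X : Matrix ι ι R} (hX : Xᵀ = X) {x y : ι → R} {s c p q : R}
    (hx : A *ᵥ x = p • x - q • y) (hy : A *ᵥ y = q • x + p • y) :
    Sum.elim x y ⬝ᵥ (sectorLMI s c A X *ᵥ Sum.elim x y) =
      2 * (s * p + c * q) * (x ⬝ᵥ (X *ᵥ x) + y ⬝ᵥ (X *ᵥ y)) := by
  have dotProduct_transpose_mulVec (B : Matrix ι ι R) (u w : ι → R) :
      u ⬝ᵥ (Bᵀ *ᵥ w) = (B *ᵥ u) ⬝ᵥ w := by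
    rw [dotProduct_mulVec, vecMul_transpose]
  have hXyx : y ⬝ᵥ (X *ᵥ x) = x ⬝ᵥ (X *ᵥ y) := by
    rw [← hX, dotProduct_transpose_mulVec, dotProduct_comm, hX]
  rw [sectorLMI, fromBlocks_mulVec, Sum.elim_comp_inl, Sum.elim_comp_inr,
    sumElim_dotProduct_sumElim]
  simp only [smul_mulVec, add_mulVec, sub_mulVec, ← mulVec_mulVec, dotProduct_transpose_mulVec,
    hx, hy, dotProduct_add, dotProduct_sub, dotProduct_smul, mulVec_add, mulVec_sub, mulVec_smul,
    add_dotProduct, sub_dotProduct, smul_dotProduct, smul_eq_mul, hXyx]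
  ring

theorem mul_add_mul_neg_of_posDef_neg_sectorLMI {A X : Matrix ι ι ℝ} {s c p q : ℝ} {x y : ι → ℝ}
    (hM : (-sectorLMI s c A X).PosDef) (hX : X.PosDef)
    (hx : A *ᵥ x = p • x - q • y) (hy : A *ᵥ y = q • x + p • y) (hxy : x ≠ 0 ∨ y ≠ 0) :
    s * p + c * q < 0 := by
  have hXs : Xᵀ = X := by simpa using hX.isHermitian.eq
  have hP : 0 < x ⬝ᵥ (X *ᵥ x) + y ⬝ᵥ (X *ᵥ y) := by
    have hxX : 0 ≤ x ⬝ᵥ (X *ᵥ x) := by simpa using hX.posSemidef.dotProduct_mulVec_nonneg x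
    have hyX : 0 ≤ y ⬝ᵥ (X *ᵥ y) := by simpa using hX.posSemidef.dotProduct_mulVec_nonneg y
    rcases hxy with h | h
    · linarith [by simpa using hX.dotProduct_mulVec_pos h]
    · linarith [by simpa using hX.dotProduct_mulVec_pos h]
  have hxy' : Sum.elim x y ≠ 0 := by
    contrapose! hxy
    exact ⟨funext fun i ↦ congrFun hxy (.inl i), funext fun i ↦ congrFun hxy (.inr i)⟩
  have hQ := hM.dotProduct_mulVec_pos hxy'
  rw [star_trivial, neg_mulVec, dotProduct_neg,
    sumElim_dotProduct_sectorLMI_mulVec_sumElim hXs hx hy] at hQ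
  nlinarith

theorem exists_mulVec_eq_smul_of_mem_spectrum {K : Type*} [Field K] [DecidableEq ι]
    {B : Matrix ι ι K} {μ : K} (hμ : μ ∈ spectrum K B) :
    ∃ v ≠ 0, B *ᵥ v = μ • v := by
  rw [← spectrum_toLin'] at hμ
  obtain ⟨v, hv⟩ := (Module.End.HasEigenvalue.of_mem_spectrum hμ).exists_hasEigenvector
  exact ⟨v, hv.2, by simpa using hv.apply_eq_smul⟩

theorem re_map_ofReal_mulVec (A : Matrix ι ι ℝ) (v : ι → ℂ) (i : ι) :
    ((A.map (↑) *ᵥ v) i).re = (A *ᵥ fun j ↦ (v j).re) i := by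
  simp [mulVec, dotProduct, Complex.re_sum]

theorem im_map_ofReal_mulVec (A : Matrix ι ι ℝ) (v : ι → ℂ) (i : ι) :
    ((A.map (↑) *ᵥ v) i).im = (A *ᵥ fun j ↦ (v j).im) i := by
  simp [mulVec, dotProduct, Complex.im_sum]

theorem mul_re_add_mul_abs_im_neg_of_posDef_neg_sectorLMI {A X : Matrix ι ι ℝ}
    {s c : ℝ} {μ : ℂ} {v : ι → ℂ} (hM : (-sectorLMI s c A X).PosDef) (hX : X.PosDef)
    (hv : v ≠ 0) (hAv : A.map (↑) *ᵥ v = μ • v) :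
    s * μ.re + c * |μ.im| < 0 := by
  set x : ι → ℝ := fun i ↦ (v i).re
  set y : ι → ℝ := fun i ↦ (v i).im
  have hx : A *ᵥ x = μ.re • x - μ.im • y := funext fun i ↦ by
    simpa [x, y, re_map_ofReal_mulVec] using congrArg Complex.re (congrFun hAv i)
  have hy : A *ᵥ y = μ.im • x + μ.re • y := funext fun i ↦ by
    simpa [x, y, im_map_ofReal_mulVec, add_comm] using congrArg Complex.im (congrFun hAv i)
  have hxy : x ≠ 0 ∨ y ≠ 0 := by
    contrapose! hv
    exact funext fun i ↦ Complex.ext (congrFun hv.1 i) (congrFun hv.2 i)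
  -- the conjugate eigenpair `(conj μ, conj v)` gives the inequality for `-μ.im`
  have hx' : A *ᵥ x = μ.re • x - (-μ.im) • (-y) := by rw [hx, neg_smul_neg]
  have hy' : A *ᵥ (-y) = (-μ.im) • x + μ.re • (-y) := by
    rw [mulVec_neg, hy, neg_smul, smul_neg, neg_add]
  rcases abs_cases μ.im with ⟨h, -⟩ | ⟨h, -⟩ <;> rw [h]
  · exact mul_add_mul_neg_of_posDef_neg_sectorLMI hM hX hx hy hxy
  · exact mul_add_mul_neg_of_posDef_neg_sectorLMI hM hX hx' hy' (by rwa [neg_ne_zero])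

end Matrix

theorem Complex.sin_mul_re_add_cos_mul_abs_im (z : ℂ) (θ : ℝ) :
    Real.sin θ * z.re + Real.cos θ * |z.im| = ‖z‖ * Real.sin (θ + |z.arg|) := by
  have hsin : |Real.sin z.arg| = Real.sin |z.arg| :=
    Real.abs_sin_eq_sin_abs_of_abs_le_pi (abs_le.2 ⟨(neg_pi_lt_arg z).le, arg_le_pi z⟩)
  rw [← norm_mul_cos_arg, ← norm_mul_sin_arg, abs_mul, abs_norm, hsin, Real.sin_add,
    Real.cos_abs]
  ring

theorem Complex.pi_sub_lt_abs_arg {z : ℂ} {θ : ℝ} (hθ : 0 ≤ θ)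
    (h : Real.sin θ * z.re + Real.cos θ * |z.im| < 0) : Real.pi - θ < |z.arg| := by
  rw [sin_mul_re_add_cos_mul_abs_im] at h
  by_contra! hle
  have := Real.sin_nonneg_of_nonneg_of_le_pi (add_nonneg hθ (abs_nonneg z.arg)) (by linarith)
  nlinarith [norm_nonneg z]

theorem stmt7_general {n : ℕ} (A : Matrix (Fin n) (Fin n) ℝ) (α : ℝ) (hα2 : α < 2)
    (X : Matrix (Fin n) (Fin n) ℝ) (hX : X.PosDef) :
    letI θ : ℝ := Real.pi - α * Real.pi / 2
    (-(fromBlocks (Real.sin θ • (Aᵀ * X + X * A)) (Real.cos θ • (X * A - Aᵀ * X))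
        (Real.cos θ • (Aᵀ * X - X * A)) (Real.sin θ • (Aᵀ * X + X * A)))).PosDef →
    ∀ lam ∈ spectrum ℂ (A.map (fun a => (a : ℂ))), |lam.arg| > α * Real.pi / 2 := by
  intro hM lam hlam
  obtain ⟨v, hv, hAv⟩ := exists_mulVec_eq_smul_of_mem_spectrum hlam
  have hθ : 0 ≤ Real.pi - α * Real.pi / 2 := by nlinarith [Real.pi_pos]
  have := Complex.pi_sub_lt_abs_arg hθ
    (mul_re_add_mul_abs_im_neg_of_posDef_neg_sectorLMI hM hX hv hAv)
  linarith

theorem stmt7 {n : ℕ} (A : Matrix (Fin n) (Fin n) ℝ) (α : ℝ) (hα : 1 ≤ α) (hα2 : α < 2)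
    (X : Matrix (Fin n) (Fin n) ℝ) (hX : X.PosDef) (hXsymm : X.IsSymm) :
    letI θ : ℝ := Real.pi - α * Real.pi / 2
    (-(fromBlocks (Real.sin θ • (Aᵀ * X + X * A)) (Real.cos θ • (X * A - Aᵀ * X))
        (Real.cos θ • (Aᵀ * X - X * A)) (Real.sin θ • (Aᵀ * X + X * A)))).PosDef →
    ∀ lam ∈ spectrum ℂ (A.map (fun a => (a : ℂ))), |lam.arg| > α * Real.pi / 2 :=
  stmt7_general A α hα2 X hX
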